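/- Let (Wₙ) be a sequence of graphons converging to W in cut-norm. Then ω_frac(W) ≤ liminfₙ ω_frac(Wₙ). (Lower semicontinuity of the fractional clique number.) -/

import Mathlib

open MeasureTheory ENNReal Filter
open scoped Classical

noncomputable section

variable {Ω : Type*} [MeasurableSpace Ω]

/-- A graphon: symmetric measurable function with values in `[0,1]`. -/
def IsGraphon (W : Ω → Ω → ℝ) : Prop :=
  Measurable (Function.uncurry W) ∧ (∀ x y, W x y = W y x) ∧ ∀ x y, W x y ∈ Set.Icc (0 : ℝ) 1

/-- `A` is an independent set of the graphon `W`: `W = 0` a.e. on `A × A`. -/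
def IsIndepSet (μ : Measure Ω) (W : Ω → Ω → ℝ) (A : Set Ω) : Prop :=
  MeasurableSet A ∧ ∀ᵐ p ∂(μ.prod μ), p.1 ∈ A → p.2 ∈ A → W p.1 p.2 = 0

/-- The independence number: supremum of measures of independent sets. -/
def indepNum (μ : Measure Ω) (W : Ω → Ω → ℝ) : ℝ≥0∞ :=
  ⨆ (A : Set Ω) (_ : IsIndepSet μ W A), μ A

/-- Homomorphism density of a finite graph `H` on `Fin k` in `W`
(product over unordered edges, written with `i < j`). -/
def homDensity {k : ℕ} (μ : Measure Ω) (W : Ω → Ω → ℝ) (H : SimpleGraph (Fin k)) : ℝ :=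
  ∫ x : Fin k → Ω,
    ∏ p ∈ Finset.univ.filter (fun p : Fin k × Fin k => p.1 < p.2 ∧ H.Adj p.1 p.2),
      W (x p.1) (x p.2) ∂(Measure.pi fun _ => μ)

/-- The cut norm of a kernel `U`. -/
def cutNorm (μ : Measure Ω) (U : Ω → Ω → ℝ) : ℝ :=
  ⨆ (S : {S : Set Ω // MeasurableSet S}) (T : {T : Set Ω // MeasurableSet T}),
    |∫ p in S.1 ×ˢ T.1, U p.1 p.2 ∂(μ.prod μ)|

/-- The cut distance: infimum over measure-preserving isomorphisms of the cut norm. -/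
def cutDist (μ : Measure Ω) (W₁ W₂ : Ω → Ω → ℝ) : ℝ :=
  ⨅ (e : {e : Ω ≃ᵐ Ω // MeasurePreserving e μ μ}),
    cutNorm μ (fun x y => W₁ x y - W₂ (e.1 x) (e.1 y))

/-- `W` is a graphon representation of the finite graph `G`. -/
def IsGraphonRep {V : Type*} [Fintype V] (μ : Measure Ω) (G : SimpleGraph V)
    (W : Ω → Ω → ℝ) : Prop :=
  ∃ P : V → Set Ω, (∀ v, MeasurableSet (P v)) ∧ Pairwise (Function.onFun Disjoint P) ∧
    (∀ v, μ (P v) = 1 / (Fintype.card V : ℝ≥0∞)) ∧ (⋃ v, P v) = Set.univ ∧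
    ∀ u v, ∀ᵐ p ∂(μ.prod μ), p.1 ∈ P u → p.2 ∈ P v →
      W p.1 p.2 = if G.Adj u v then 1 else 0

/-- The chromatic number of a graphon, as an extended natural number. -/
def graphonChrom (μ : Measure Ω) (W : Ω → Ω → ℝ) : ℕ∞ :=
  sInf ((↑) '' {k : ℕ | ∃ f : Ω → Fin k, Measurable f ∧ ∀ i, IsIndepSet μ W (f ⁻¹' {i})})

/-- A fractional coloring of a graphon. -/
def IsFracColoring (μ : Measure Ω) (W : Ω → Ω → ℝ) (c : Set Ω → ℝ≥0∞) : Prop :=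
  (∀ I, c I ≤ 1) ∧ (∀ I, ¬ IsIndepSet μ W I → c I = 0) ∧
    ∀ᵐ x ∂μ, 1 ≤ ∑' I : Set Ω, Set.indicator I (fun _ => c I) x

/-- The fractional chromatic number of a graphon. -/
def graphonFracChrom (μ : Measure Ω) (W : Ω → Ω → ℝ) : ℝ≥0∞ :=
  ⨅ (c : Set Ω → ℝ≥0∞) (_ : IsFracColoring μ W c), ∑' I : Set Ω, c I

/-- A fractional clique of a graphon. -/
def IsFracClique (μ : Measure Ω) (W : Ω → Ω → ℝ) (f : Ω → ℝ≥0∞) : Prop :=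
  Measurable f ∧ (∀ x, f x ≠ ∞) ∧ ∀ I, IsIndepSet μ W I → ∫⁻ x in I, f x ∂μ ≤ 1

/-- The fractional clique number of a graphon. -/
def graphonFracClique (μ : Measure Ω) (W : Ω → Ω → ℝ) : ℝ≥0∞ :=
  ⨆ (f : Ω → ℝ≥0∞) (_ : IsFracClique μ W f), ∫⁻ x, f x ∂μ

/-- The clique number of a graphon. -/
def graphonClique (μ : Measure Ω) (W : Ω → Ω → ℝ) : ℕ∞ :=
  sSup ((↑) '' {r : ℕ | 0 < homDensity μ W (⊤ : SimpleGraph (Fin r))})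

/-- Independent set of a finite simple graph. -/
def GraphIndep {V : Type*} (G : SimpleGraph V) (I : Set V) : Prop :=
  I.Pairwise fun u v => ¬ G.Adj u v

/-- Fractional chromatic number of a finite graph. -/
def fracChrom {V : Type*} [Fintype V] (G : SimpleGraph V) : ℝ≥0∞ :=
  ⨅ (c : Set V → ℝ≥0∞) (_ : (∀ I, c I ≤ 1) ∧ (∀ I, ¬ GraphIndep G I → c I = 0) ∧
      ∀ v, 1 ≤ ∑' I : Set V, Set.indicator I (fun _ => c I) v),
    ∑' I : Set V, c I

/-- Fractional clique number of a finite graph. -/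
def fracClique {V : Type*} [Fintype V] (G : SimpleGraph V) : ℝ≥0∞ :=
  ⨆ (f : V → ℝ≥0∞) (_ : ∀ I : Set V, GraphIndep G I → ∑' v : I, f v ≤ 1),
    ∑ v, f v

/-- The b-fold chromatic number of a graphon. -/
def bFoldChrom (μ : Measure Ω) (W : Ω → Ω → ℝ) (b : ℕ) : ℕ∞ :=
  sInf ((↑) '' {k : ℕ | ∃ p : Ω → Finset (Fin k),
    (∀ i, MeasurableSet {x | i ∈ p x}) ∧ (∀ x, (p x).card = b) ∧
    ∀ᵐ q ∂(μ.prod μ), W q.1 q.2 = 0 ∨ p q.1 ∩ p q.2 = ∅})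

/-- Membership in the weak* closure of the convex hull of indicators of
independent sets (the independent set polyton `IND(W)`). -/
def InIND (μ : Measure Ω) (W : Ω → Ω → ℝ) (f : Ω → ℝ) : Prop :=
  ∀ (ε : ℝ), 0 < ε → ∀ (m : ℕ) (g : Fin m → Ω → ℝ), (∀ i, Integrable (g i) μ) →
    ∃ (t : ℕ) (a : Fin t → ℝ) (I : Fin t → Set Ω),
      (∀ j, 0 ≤ a j) ∧ (∑ j, a j = 1) ∧ (∀ j, IsIndepSet μ W (I j)) ∧
      ∀ i, |∫ x, ((∑ j, a j * Set.indicator (I j) 1 x) - f x) * g i x ∂μ| < ε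

end

open MeasureTheory ENNReal Filter

/-!
Let `f` be a fractional clique of `W`, truncated so that it is bounded, and let `t > 1`.
If there were measurable sets `I k` with `∫_{I k} f > t` while the mass of `W` on `I k × I k`
tends to `0`, a limit of the measures `μ|_{I k}` along an ultrafilter would be a measure
`ν ≤ μ` with `∫ f dν ≥ t` whose square `ν ⊗ ν` gives `W` no mass; the support of `ν` would then
be an independent set of `W` of `f`-weight `> 1`. So there is `ε > 0` such that every set
on whose square `W` has mass `≤ ε` carries `f`-weight `≤ t`. An independent set of `Wₙ` has
`W`-mass on its square at most `‖Wₙ - W‖_□`, so for large `n` the function `f / t` is a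
fractional clique of `Wₙ`, and `t` can be taken arbitrarily close to `1`.
-/

open scoped Topology

namespace ENNReal

theorem tendsto_tsum_of_dominated_convergence {α β : Type*} {l : Filter α} [l.NeBot]
    {f : α → β → ℝ≥0∞} {g bound : β → ℝ≥0∞} (h_sum : ∑' k, bound k ≠ ∞)
    (hab : ∀ k, Tendsto (f · k) l (𝓝 (g k))) (h_bound : ∀ n k, f n k ≤ bound k) :
    Tendsto (fun n => ∑' k, f n k) l (𝓝 (∑' k, g k)) := by
  have hbound_fin : ∀ k, bound k ≠ ∞ := ENNReal.ne_top_of_tsum_ne_top h_sum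
  have hf_fin : ∀ n k, f n k ≠ ∞ := fun n k => ne_top_of_le_ne_top (hbound_fin k) (h_bound n k)
  have hg_le : ∀ k, g k ≤ bound k := fun k => le_of_tendsto' (hab k) (h_bound · k)
  have hg_fin : ∀ k, g k ≠ ∞ := fun k => ne_top_of_le_ne_top (hbound_fin k) (hg_le k)
  have hfsum_fin : ∀ n, ∑' k, f n k ≠ ∞ := fun n =>
    ne_top_of_le_ne_top h_sum (ENNReal.tsum_le_tsum (h_bound n))
  have hgsum_fin : ∑' k, g k ≠ ∞ := ne_top_of_le_ne_top h_sum (ENNReal.tsum_le_tsum hg_le)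
  rw [← ENNReal.tendsto_toReal_iff hfsum_fin hgsum_fin]
  simp only [ENNReal.tsum_toReal_eq (hf_fin _), ENNReal.tsum_toReal_eq hg_fin]
  refine _root_.tendsto_tsum_of_dominated_convergence (ENNReal.summable_toReal h_sum)
    (fun k => (ENNReal.tendsto_toReal (hg_fin k)).comp (hab k))
    (Eventually.of_forall fun n k => ?_)
  rw [Real.norm_eq_abs, abs_of_nonneg ENNReal.toReal_nonneg]
  exact ENNReal.toReal_mono (hbound_fin k) (h_bound n k)

end ENNReal

namespace MeasureTheory

variable {α β ι : Type*} [MeasurableSpace α] [MeasurableSpace β]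

theorem Measure.exists_le_forall_tendsto_apply {ρ : ι → Measure α} {ρ₀ : Measure α}
    [IsFiniteMeasure ρ₀] (hle : ∀ i, ρ i ≤ ρ₀) (𝒰 : Ultrafilter ι) :
    ∃ τ ≤ ρ₀, ∀ A, MeasurableSet A → Tendsto (fun i => ρ i A) 𝒰 (𝓝 (τ A)) := by
  set m : Set α → ℝ≥0∞ := fun A => (𝒰.map fun i => ρ i A).lim
  have hm : ∀ A, Tendsto (fun i => ρ i A) 𝒰 (𝓝 (m A)) := fun A =>
    (𝒰.map fun i => ρ i A).le_nhds_lim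
  have hm_empty : m ∅ = 0 := tendsto_nhds_unique (hm ∅) (by simp)
  refine ⟨Measure.ofMeasurable (fun A _ => m A) hm_empty fun f hf hdisj => ?_,
    Measure.le_iff.2 fun A hA => ?_, fun A hA => ?_⟩
  · -- countable additivity survives the limit: the series are dominated by `∑ ρ₀ (f k) < ∞`
    refine tendsto_nhds_unique (hm _) ?_
    simp only [measure_iUnion hdisj hf]
    refine ENNReal.tendsto_tsum_of_dominated_convergence ?_ (fun k => hm (f k))
      (fun i k => hle i (f k))
    rw [← measure_iUnion hdisj hf]
    exact measure_ne_top _ _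
  · rw [Measure.ofMeasurable_apply A hA]
    exact le_of_tendsto' (hm A) fun i => hle i A
  · rw [Measure.ofMeasurable_apply A hA]
    exact hm A

section SetwiseLimit

variable {ρ : ι → Measure α} {τ : Measure α} {l : Filter ι}

theorem tendsto_lintegral_simpleFunc_of_tendsto_apply
    (hρ : ∀ A, MeasurableSet A → Tendsto (fun i => ρ i A) l (𝓝 (τ A)))
    (φ : SimpleFunc α ℝ≥0∞) (hφ : ∀ x, φ x ≠ ∞) :
    Tendsto (fun i => ∫⁻ x, φ x ∂ρ i) l (𝓝 (∫⁻ x, φ x ∂τ)) := by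
  simp only [SimpleFunc.lintegral_eq_lintegral, SimpleFunc.lintegral]
  refine tendsto_finsetSum _ fun c hc => ?_
  obtain ⟨x, rfl⟩ := SimpleFunc.mem_range.1 hc
  exact ENNReal.Tendsto.const_mul (hρ _ (φ.measurableSet_preimage _)) (Or.inr (hφ x))

theorem tendsto_lintegral_of_tendsto_apply [l.NeBot] {ρ₀ : Measure α}
    (hρ : ∀ A, MeasurableSet A → Tendsto (fun i => ρ i A) l (𝓝 (τ A))) (hle : ∀ i, ρ i ≤ ρ₀)
    {h : α → ℝ≥0∞} (hh : Measurable h) (hfin : ∫⁻ x, h x ∂ρ₀ ≠ ∞) :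
    Tendsto (fun i => ∫⁻ x, h x ∂ρ i) l (𝓝 (∫⁻ x, h x ∂τ)) := by
  have happrox_le : ∀ n x, SimpleFunc.eapprox h n x ≤ h x := fun n x =>
    (le_iSup (fun n => SimpleFunc.eapprox h n x) n).trans_eq (SimpleFunc.iSup_eapprox_apply hh x)
  have happrox : ∀ n, Tendsto (fun i => ∫⁻ x, SimpleFunc.eapprox h n x ∂ρ i) l
      (𝓝 (∫⁻ x, SimpleFunc.eapprox h n x ∂τ)) := fun n =>
    tendsto_lintegral_simpleFunc_of_tendsto_apply hρ _ fun x =>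
      (SimpleFunc.eapprox_lt_top h n x).ne
  refine tendsto_of_le_liminf_of_limsup_le ?_ ?_
  · rw [lintegral_eq_iSup_eapprox_lintegral hh]
    refine iSup_le fun n => ?_
    rw [← SimpleFunc.lintegral_eq_lintegral, ← (happrox n).liminf_eq]
    exact liminf_le_liminf (Eventually.of_forall fun i => lintegral_mono (happrox_le n))
  · -- a simple function below `h` approximates it in `L¹(ρ₀)`, hence uniformly in `L¹(ρ i)`
    refine ENNReal.le_of_forall_pos_le_add fun ε hε _ => ?_
    obtain ⟨n, hn⟩ : ∃ n, ∫⁻ x, h x ∂ρ₀ < ∫⁻ x, SimpleFunc.eapprox h n x ∂ρ₀ + ε := by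
      have := ENNReal.lt_add_right hfin (ENNReal.coe_ne_zero.2 hε.ne')
      conv_rhs at this => rw [lintegral_eq_iSup_eapprox_lintegral hh, ENNReal.iSup_add]
      simpa only [SimpleFunc.lintegral_eq_lintegral, lt_iSup_iff] using this
    set φ := SimpleFunc.eapprox h n
    have herr : ∀ i, ∫⁻ x, (h x - φ x) ∂ρ i ≤ ε := fun i => calc
      ∫⁻ x, (h x - φ x) ∂ρ i ≤ ∫⁻ x, (h x - φ x) ∂ρ₀ := lintegral_mono' (hle i) le_rfl
      _ = ∫⁻ x, h x ∂ρ₀ - ∫⁻ x, φ x ∂ρ₀ :=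
        lintegral_sub φ.measurable (ne_top_of_le_ne_top hfin (lintegral_mono (happrox_le n)))
          (Eventually.of_forall (happrox_le n))
      _ ≤ ε := tsub_le_iff_left.2 hn.le
    calc limsup (fun i => ∫⁻ x, h x ∂ρ i) l
        ≤ limsup (fun i => ∫⁻ x, φ x ∂ρ i + ε) l := by
          refine limsup_le_limsup (Eventually.of_forall fun i => ?_)
          calc ∫⁻ x, h x ∂ρ i = ∫⁻ x, (φ x + (h x - φ x)) ∂ρ i :=
                lintegral_congr fun x => (add_tsub_cancel_of_le (happrox_le n x)).symm
            _ ≤ ∫⁻ x, φ x ∂ρ i + ε := by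
                rw [lintegral_add_left φ.measurable]
                gcongr
                exact herr i
      _ = ∫⁻ x, φ x ∂τ + ε := ((happrox n).add_const _).limsup_eq
      _ ≤ ∫⁻ x, h x ∂τ + ε := by gcongr with x; exact happrox_le n x

end SetwiseLimit

theorem Measure.eq_prod_of_tendsto_apply {l : Filter ι} [l.NeBot] {ρ : ι → Measure α}
    {ρ' : ι → Measure β} [∀ i, SFinite (ρ' i)] {ν : Measure α} {ν' : Measure β}
    [IsFiniteMeasure ν] [IsFiniteMeasure ν'] {τ : Measure (α × β)}
    (hρ : ∀ A, MeasurableSet A → Tendsto (fun i => ρ i A) l (𝓝 (ν A)))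
    (hρ' : ∀ B, MeasurableSet B → Tendsto (fun i => ρ' i B) l (𝓝 (ν' B)))
    (hτ : ∀ A B, MeasurableSet A → MeasurableSet B →
      Tendsto (fun i => (ρ i).prod (ρ' i) (A ×ˢ B)) l (𝓝 (τ (A ×ˢ B)))) :
    τ = ν.prod ν' := by
  refine (Measure.prod_eq fun A B hA hB => tendsto_nhds_unique (hτ A B hA hB) ?_).symm
  simp only [Measure.prod_prod]
  exact ENNReal.Tendsto.mul (hρ A hA) (Or.inr (measure_ne_top _ _)) (hρ' B hB)
    (Or.inr (measure_ne_top _ _))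

theorem Measure.AbsolutelyContinuous.exists_restrict_absolutelyContinuous {ν μ : Measure α}
    [SigmaFinite ν] [SigmaFinite μ] (h : ν ≪ μ) :
    ∃ S, MeasurableSet S ∧ ν Sᶜ = 0 ∧ μ.restrict S ≪ ν := by
  have hS : MeasurableSet {x | ν.rnDeriv μ x ≠ 0} :=
    (Measure.measurable_rnDeriv ν μ (measurableSet_singleton 0)).compl
  refine ⟨_, hS, ?_, fun s hs => ?_⟩
  · nth_rw 1 [← Measure.withDensity_rnDeriv_eq ν μ h]
    rw [withDensity_apply _ hS.compl]
    exact setLIntegral_eq_zero hS.compl fun x hx => not_not.1 hx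
  · rw [measure_eq_zero_iff_ae_notMem] at hs ⊢
    exact (ae_restrict_iff' hS).2 (Measure.ae_rnDeriv_ne_zero_imp_of_ae μ hs)

theorem lintegral_eq_iSup_lintegral_min_natCast (μ : Measure α) {f : α → ℝ≥0∞}
    (hf : Measurable f) : ∫⁻ x, f x ∂μ = ⨆ n : ℕ, ∫⁻ x, min (f x) n ∂μ := by
  rw [← lintegral_iSup (fun n => hf.min measurable_const)
    fun m n hmn x => min_le_min_left _ (Nat.cast_le.2 hmn)]
  refine lintegral_congr fun x => ?_
  rw [← inf_iSup_eq, ENNReal.iSup_natCast]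
  exact (min_top_right _).symm

end MeasureTheory

section Graphon

variable {Ω : Type*} [MeasurableSpace Ω] {μ : Measure Ω} {W V : Ω → Ω → ℝ}

theorem IsGraphon.integrable (hW : IsGraphon W) (ρ : Measure (Ω × Ω)) [IsFiniteMeasure ρ] :
    Integrable (fun p : Ω × Ω => W p.1 p.2) ρ :=
  Integrable.of_bound hW.1.aestronglyMeasurable 1 (Eventually.of_forall fun p => by
    rw [Real.norm_eq_abs, abs_le]
    exact ⟨by linarith [(hW.2.2 p.1 p.2).1], (hW.2.2 p.1 p.2).2⟩)

theorem IsGraphon.isIndepSet_of_lintegral_prod_eq_zero [SFinite μ] {ν : Measure Ω} [SFinite ν]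
    (hW : IsGraphon W) (hν : ∫⁻ p, ENNReal.ofReal (W p.1 p.2) ∂ν.prod ν = 0) {S : Set Ω}
    (hS : MeasurableSet S) (hSν : μ.restrict S ≪ ν) : IsIndepSet μ W S := by
  have hW_nonpos : ∀ᵐ p ∂ν.prod ν, W p.1 p.2 ≤ 0 := by
    filter_upwards [(lintegral_eq_zero_iff (ENNReal.measurable_ofReal.comp hW.1)).1 hν]
      with p hp
    exact ENNReal.ofReal_eq_zero.1 hp
  have hW_nonpos_S : ∀ᵐ p ∂(μ.restrict S).prod (μ.restrict S), W p.1 p.2 ≤ 0 :=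
    (hSν.prod hSν).ae_le hW_nonpos
  rw [Measure.prod_restrict, ae_restrict_iff' (hS.prod hS)] at hW_nonpos_S
  refine ⟨hS, ?_⟩
  filter_upwards [hW_nonpos_S] with p hp h₁ h₂
  exact le_antisymm (hp ⟨h₁, h₂⟩) (hW.2.2 _ _).1

theorem abs_setIntegral_prod_le_cutNorm (μ : Measure Ω) [IsFiniteMeasure μ] {U : Ω → Ω → ℝ}
    {C : ℝ} (hU : ∀ x y, |U x y| ≤ C) {S T : Set Ω} (hS : MeasurableSet S)
    (hT : MeasurableSet T) :
    |∫ p in S ×ˢ T, U p.1 p.2 ∂μ.prod μ| ≤ cutNorm μ U := by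
  have hbound : ∀ S T : {S : Set Ω // MeasurableSet S},
      |∫ p in S.1 ×ˢ T.1, U p.1 p.2 ∂μ.prod μ| ≤ |C| * (μ.prod μ).real Set.univ := fun S T =>
    calc |∫ p in S.1 ×ˢ T.1, U p.1 p.2 ∂μ.prod μ|
        ≤ C * (μ.prod μ).real (S.1 ×ˢ T.1) := by
          simpa only [Real.norm_eq_abs] using norm_setIntegral_le_of_norm_le_const
            (f := fun p : Ω × Ω => U p.1 p.2) (measure_lt_top (μ.prod μ) (S.1 ×ˢ T.1))
            fun p _ => hU p.1 p.2
      _ ≤ |C| * (μ.prod μ).real Set.univ :=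
          mul_le_mul (le_abs_self C) (measureReal_mono (Set.subset_univ _)) measureReal_nonneg
            (abs_nonneg C)
  have hbdd : ∀ S : {S : Set Ω // MeasurableSet S}, BddAbove (Set.range fun T :
      {T : Set Ω // MeasurableSet T} => |∫ p in S.1 ×ˢ T.1, U p.1 p.2 ∂μ.prod μ|) := fun S =>
    ⟨_, Set.forall_mem_range.2 (hbound S)⟩
  refine le_ciSup_of_le ⟨_, Set.forall_mem_range.2 fun S => ciSup_le (hbound S)⟩ ⟨S, hS⟩ ?_
  exact le_ciSup (hbdd ⟨S, hS⟩) ⟨T, hT⟩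

theorem IsIndepSet.lintegral_prod_le_cutNorm [IsFiniteMeasure μ] (hW : IsGraphon W)
    (hV : IsGraphon V) {I : Set Ω} (hI : IsIndepSet μ V I) :
    ∫⁻ p in I ×ˢ I, ENNReal.ofReal (W p.1 p.2) ∂μ.prod μ
      ≤ ENNReal.ofReal (cutNorm μ fun x y => V x y - W x y) := by
  have hV_zero : ∫ p in I ×ˢ I, V p.1 p.2 ∂μ.prod μ = 0 := by
    refine integral_eq_zero_of_ae ?_
    filter_upwards [ae_restrict_of_ae hI.2, ae_restrict_mem (hI.1.prod hI.1)] with p hp hpI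
    exact hp hpI.1 hpI.2
  have hVW_le_one : ∀ x y, |V x y - W x y| ≤ 1 := fun x y => by
    obtain ⟨⟨hV₀, hV₁⟩, ⟨hW₀, hW₁⟩⟩ := And.intro (hV.2.2 x y) (hW.2.2 x y)
    exact abs_sub_le_iff.2 ⟨by linarith, by linarith⟩
  rw [← ofReal_integral_eq_lintegral_ofReal (hW.integrable _)
    (Eventually.of_forall fun p => (hW.2.2 p.1 p.2).1)]
  refine ENNReal.ofReal_le_ofReal ?_
  calc ∫ p in I ×ˢ I, W p.1 p.2 ∂μ.prod μ
      = -∫ p in I ×ˢ I, (V p.1 p.2 - W p.1 p.2) ∂μ.prod μ := by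
        rw [integral_sub (hV.integrable _) (hW.integrable _), hV_zero, zero_sub, neg_neg]
    _ ≤ |∫ p in I ×ˢ I, (V p.1 p.2 - W p.1 p.2) ∂μ.prod μ| := neg_le_abs _
    _ ≤ cutNorm μ fun x y => V x y - W x y :=
        abs_setIntegral_prod_le_cutNorm μ hVW_le_one hI.1 hI.1

theorem IsGraphon.exists_pos_forall_setLIntegral_le [IsFiniteMeasure μ] (hW : IsGraphon W)
    {f : Ω → ℝ≥0∞} (hf : Measurable f) (hf_fin : ∫⁻ x, f x ∂μ ≠ ∞)
    (hf_indep : ∀ I, IsIndepSet μ W I → ∫⁻ x in I, f x ∂μ ≤ 1) {t : ℝ≥0∞} (ht : 1 < t) :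
    ∃ ε : ℝ, 0 < ε ∧ ∀ I : Set Ω,
      ∫⁻ p in I ×ˢ I, ENNReal.ofReal (W p.1 p.2) ∂μ.prod μ ≤ ENNReal.ofReal ε →
      ∫⁻ x in I, f x ∂μ ≤ t := by
  by_contra! hcon
  choose I hI_sparse hI_heavy using fun k : ℕ => hcon (1 / (k + 1)) Nat.one_div_pos_of_nat
  have hW_meas : Measurable fun p : Ω × Ω => ENNReal.ofReal (W p.1 p.2) :=
    ENNReal.measurable_ofReal.comp hW.1
  obtain ⟨ν, hνμ, hν⟩ := Measure.exists_le_forall_tendsto_apply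
    (fun k => Measure.restrict_le_self : ∀ k, μ.restrict (I k) ≤ μ) (hyperfilter ℕ)
  obtain ⟨τ, -, hτ⟩ := Measure.exists_le_forall_tendsto_apply
    (fun k => Measure.restrict_le_self : ∀ k, (μ.prod μ).restrict (I k ×ˢ I k) ≤ μ.prod μ)
    (hyperfilter ℕ)
  have : IsFiniteMeasure ν := isFiniteMeasure_of_le μ hνμ
  have hτν : τ = ν.prod ν := Measure.eq_prod_of_tendsto_apply hν hν fun A B hA hB => by
    simpa only [Measure.prod_restrict] using hτ _ (hA.prod hB)
  have hWν : ∫⁻ p, ENNReal.ofReal (W p.1 p.2) ∂ν.prod ν = 0 := by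
    rw [← hτν]
    refine tendsto_nhds_unique (tendsto_lintegral_of_tendsto_apply hτ
      (fun k => Measure.restrict_le_self) hW_meas (hW.integrable _).lintegral_lt_top.ne) ?_
    have h_bound : Tendsto (fun k : ℕ => ENNReal.ofReal (1 / (k + 1))) atTop (𝓝 0) := by
      simpa only [ENNReal.ofReal_zero] using
        ENNReal.tendsto_ofReal tendsto_one_div_add_atTop_nhds_zero_nat
    exact (tendsto_of_tendsto_of_tendsto_of_le_of_le tendsto_const_nhds h_bound
      (fun k => zero_le) hI_sparse).mono_left
        (hyperfilter_le_cofinite.trans Nat.cofinite_eq_atTop.le)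
  have hfν : t ≤ ∫⁻ x, f x ∂ν := ge_of_tendsto
    (tendsto_lintegral_of_tendsto_apply hν (fun k => Measure.restrict_le_self) hf hf_fin)
    (Eventually.of_forall fun k => (hI_heavy k).le)
  obtain ⟨S, hS, hνS, hμS⟩ :=
    (Measure.absolutelyContinuous_of_le hνμ).exists_restrict_absolutelyContinuous
  have hfνS : ∫⁻ x, f x ∂ν ≤ ∫⁻ x in S, f x ∂μ := by
    rw [← Measure.restrict_eq_self_of_ae_mem (mem_ae_iff.2 hνS)]
    exact lintegral_mono' (Measure.restrict_mono subset_rfl hνμ) le_rfl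
  exact (ht.trans_le (hfν.trans (hfνS.trans (hf_indep S
    (hW.isIndepSet_of_lintegral_prod_eq_zero hWν hS hμS))))).false

theorem lintegral_div_le_graphonFracClique {g : Ω → ℝ≥0∞} (hg : Measurable g)
    (hg_fin : ∀ x, g x ≠ ∞) {t : ℝ≥0∞} (ht₀ : t ≠ 0) (ht : t ≠ ∞)
    (hg_indep : ∀ I, IsIndepSet μ W I → ∫⁻ x in I, g x ∂μ ≤ t) :
    (∫⁻ x, g x ∂μ) / t ≤ graphonFracClique μ W := by
  refine le_iSup₂_of_le (fun x => t⁻¹ * g x) ⟨hg.const_mul _,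
    fun x => ENNReal.mul_ne_top (ENNReal.inv_ne_top.2 ht₀) (hg_fin x), fun I hI => ?_⟩ ?_
  · rw [lintegral_const_mul _ hg, ← ENNReal.inv_mul_cancel ht₀ ht]
    gcongr
    exact hg_indep I hI
  · rw [lintegral_const_mul _ hg, ENNReal.div_eq_inv_mul]

theorem IsFracClique.eventually_lt_graphonFracClique [IsFiniteMeasure μ] (hW : IsGraphon W)
    {Wn : ℕ → Ω → Ω → ℝ} (hWn : ∀ n, IsGraphon (Wn n))
    (hconv : Tendsto (fun n => cutNorm μ fun x y => Wn n x y - W x y) atTop (𝓝 0))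
    {f : Ω → ℝ≥0∞} (hf : IsFracClique μ W f) {b : ℝ≥0∞} (hb : b < ∫⁻ x, f x ∂μ) :
    ∀ᶠ n in atTop, b < graphonFracClique μ (Wn n) := by
  obtain ⟨M, hM⟩ : ∃ M : ℕ, b < ∫⁻ x, min (f x) M ∂μ :=
    lt_iSup_iff.1 (lintegral_eq_iSup_lintegral_min_natCast μ hf.1 ▸ hb)
  set g := fun x => min (f x) (M : ℝ≥0∞)
  have hg : Measurable g := hf.1.min measurable_const
  have hg_fin : ∫⁻ x, g x ∂μ ≠ ∞ :=
    ((lintegral_mono fun x => min_le_right (f x) (M : ℝ≥0∞)).trans_lt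
      (lintegral_const_lt_top (ENNReal.natCast_ne_top M))).ne
  obtain ⟨b', hbb', hb'⟩ := exists_between hM
  have hb'₀ : b' ≠ 0 := (pos_of_gt hbb').ne'
  have ht : 1 < (∫⁻ x, g x ∂μ) / b' :=
    (ENNReal.lt_div_iff_mul_lt (Or.inl hb'₀) (Or.inl (hb'.trans_le le_top).ne)).2
      (by rwa [one_mul])
  obtain ⟨ε, hε, hg_sparse⟩ := hW.exists_pos_forall_setLIntegral_le hg hg_fin
    (fun I hI => (lintegral_mono fun x => min_le_left _ _).trans (hf.2.2 I hI)) ht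
  filter_upwards [hconv.eventually (gt_mem_nhds hε)] with n hn
  calc b < b' := hbb'
    _ = (∫⁻ x, g x ∂μ) / ((∫⁻ x, g x ∂μ) / b') :=
        (ENNReal.div_div_cancel (pos_of_gt hb').ne' hg_fin).symm
    _ ≤ graphonFracClique μ (Wn n) :=
        lintegral_div_le_graphonFracClique hg
          (fun x => ne_top_of_le_ne_top (ENNReal.natCast_ne_top M) (min_le_right _ _))
          (zero_lt_one.trans ht).ne' (ENNReal.div_ne_top hg_fin hb'₀) fun I hI =>
            hg_sparse I ((hI.lintegral_prod_le_cutNorm hW (hWn n)).trans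
              (ENNReal.ofReal_le_ofReal hn.le))

end Graphon

theorem stmt_14_general {Ω : Type*} [MeasurableSpace Ω] (μ : Measure Ω) [IsProbabilityMeasure μ]
    {W : Ω → Ω → ℝ} (hW : IsGraphon W) (Wn : ℕ → Ω → Ω → ℝ)
    (hWn : ∀ n, IsGraphon (Wn n))
    (hconv : Tendsto (fun n => cutNorm μ (fun x y => Wn n x y - W x y)) atTop (nhds 0)) :
    graphonFracClique μ W ≤ liminf (fun n => graphonFracClique μ (Wn n)) atTop := by
  refine iSup₂_le fun f hf => ?_
  rw [le_liminf_iff]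
  exact fun b hb => hf.eventually_lt_graphonFracClique hW hWn hconv hb

theorem stmt_14 {Ω : Type*} [MeasurableSpace Ω] (μ : Measure Ω) [IsProbabilityMeasure μ]
    [NullSingletonClass μ] {W : Ω → Ω → ℝ} (hW : IsGraphon W) (Wn : ℕ → Ω → Ω → ℝ)
    (hWn : ∀ n, IsGraphon (Wn n))
    (hconv : Tendsto (fun n => cutNorm μ (fun x y => Wn n x y - W x y)) atTop (nhds 0)) :
    graphonFracClique μ W ≤ liminf (fun n => graphonFracClique μ (Wn n)) atTop :=
  stmt_14_general μ hW Wn hWn hconv
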